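/- arXiv:2106.00726 — 2 statements merged into one kernel-verified Lean document; each statement's English description precedes it below -/
import Mathlib

section
/- Let A be an n×n complex matrix, λ an eigenvalue of A, and z a complex number not in the spectrum of A such that σₙ(zIₙ − A) = |z − λ|. Then λ is a semisimple eigenvalue of A, i.e., the root subspace (generalized eigenspace) of A associated with λ equals the eigenspace ker(λIₙ − A), so the algebraic multiplicity of λ equals its geometric multiplicity. -/
/-!
Write `N = μ - A` and `c = z - μ`, so that `z - A = c + N`, and the hypothesis on the smallest
singular value reads `|c| ‖v‖ ≤ ‖(c + N) v‖` for all `v`. If `N² y = 0` but `x = N y ≠ 0`,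
move `y` along `x` to a vector `w = y + t x` orthogonal to `x`. Then `v = w - c⁻¹ x` satisfies
`(c + N) v = c w`, whereas `‖v‖ > ‖w‖` by Pythagoras: a contradiction. Hence `ker N² = ker N`,
and therefore `ker Nᵏ = ker N` for every `k ≥ 1`. When `z = μ` the matrix `N` is invertible.
-/

open Matrix

/-- The smallest singular value of a square complex matrix `M`:
the nonnegative square root of the smallest eigenvalue of `Mᴴ * M`. -/
noncomputable def sigmaMin {n : ℕ} (M : Matrix (Fin n) (Fin n) ℂ) : ℝ :=
  Real.sqrt (⨅ i, (Matrix.isHermitian_conjTranspose_mul_self M).eigenvalues i)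

theorem Module.End.ker_pow_eq_ker_of_ker_sq_le {K V : Type*} [DivisionRing K] [AddCommGroup V]
    [Module K V] (f : Module.End K V) (h : LinearMap.ker (f ^ 2) ≤ LinearMap.ker f) {k : ℕ}
    (hk : k ≠ 0) : LinearMap.ker (f ^ k) = LinearMap.ker f := by
  obtain ⟨m, rfl⟩ := Nat.exists_eq_add_of_le (Nat.one_le_iff_ne_zero.2 hk)
  have h1 : LinearMap.ker (f ^ 1) = LinearMap.ker (f ^ 2) :=
    le_antisymm (LinearMap.ker_le_ker_comp _ _) (pow_one f ▸ h)
  rw [← Module.End.ker_pow_constant h1 m, pow_one]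

theorem Matrix.mulVecLin_pow {R n : Type*} [CommSemiring R] [Fintype n] [DecidableEq n]
    (M : Matrix n n R) (k : ℕ) : (M ^ k).mulVecLin = M.mulVecLin ^ k :=
  M.toLin'_pow k

section InnerProductSpace

variable {𝕜 E : Type*} [RCLike 𝕜] [NormedAddCommGroup E] [InnerProductSpace 𝕜 E]

theorem exists_inner_add_smul_eq_zero {x : E} (hx : x ≠ 0) (y : E) :
    ∃ t : 𝕜, inner 𝕜 x (y + t • x) = 0 :=
  ⟨-(inner 𝕜 x y / inner 𝕜 x x), by
    rw [inner_add_right, inner_smul_right, neg_mul, div_mul_cancel₀ _ (inner_self_ne_zero.2 hx),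
      add_neg_cancel]⟩

theorem norm_lt_norm_sub_of_inner_eq_zero {w u : E} (h : inner 𝕜 w u = 0) (hu : u ≠ 0) :
    ‖w‖ < ‖w - u‖ := by
  have hsq : ‖w - u‖ ^ 2 = ‖w‖ ^ 2 + ‖u‖ ^ 2 := by
    rw [norm_sub_sq (𝕜 := 𝕜), h, map_zero, mul_zero, sub_zero]
  have hu' : 0 < ‖u‖ := norm_pos_iff.2 hu
  nlinarith [norm_nonneg w, norm_nonneg (w - u)]

theorem Module.End.ker_sq_le_ker_of_forall_norm_le (N : Module.End 𝕜 E) {c : 𝕜} (hc : c ≠ 0)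
    (h : ∀ v, ‖c‖ * ‖v‖ ≤ ‖c • v + N v‖) : LinearMap.ker (N ^ 2) ≤ LinearMap.ker N := by
  intro y hy
  rw [LinearMap.mem_ker, sq, Module.End.mul_apply] at hy
  rw [LinearMap.mem_ker]
  by_contra hx
  obtain ⟨t, ht⟩ := exists_inner_add_smul_eq_zero (𝕜 := 𝕜) hx y
  set w := y + t • N y
  have hNw : N w = N y := by simp [w, hy]
  have hv : c • (w - c⁻¹ • N y) + N (w - c⁻¹ • N y) = c • w := by
    rw [map_sub, map_smul, hNw, hy, smul_zero, sub_zero, smul_sub, smul_smul, mul_inv_cancel₀ hc,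
      one_smul, sub_add_cancel]
  have hlt : ‖w‖ < ‖w - c⁻¹ • N y‖ :=
    norm_lt_norm_sub_of_inner_eq_zero (𝕜 := 𝕜)
      (by rw [inner_smul_right, inner_eq_zero_symm.1 ht, mul_zero])
      (smul_ne_zero (inv_ne_zero hc) hx)
  have hle := h (w - c⁻¹ • N y)
  rw [hv, norm_smul] at hle
  exact hlt.not_ge (le_of_mul_le_mul_left hle (norm_pos_iff.2 hc))

end InnerProductSpace

open scoped MatrixOrder ComplexOrder in
theorem Matrix.IsHermitian.iInf_eigenvalues_mul_dotProduct_le {𝕜 n : Type*} [RCLike 𝕜] [Fintype n]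
    [DecidableEq n] {H : Matrix n n 𝕜} (hH : H.IsHermitian) (v : n → 𝕜) :
    (⨅ i, hH.eigenvalues i) * RCLike.re (star v ⬝ᵥ v) ≤ RCLike.re (star v ⬝ᵥ H *ᵥ v) := by
  have hle : algebraMap ℝ _ (⨅ i, hH.eigenvalues i) ≤ H := by
    rw [algebraMap_le_iff_le_spectrum hH.isSelfAdjoint, hH.spectrum_real_eq_range_eigenvalues]
    rintro _ ⟨i, rfl⟩
    exact ciInf_le (Set.finite_range _).bddBelow i
  have := (RCLike.nonneg_iff.1 ((Matrix.le_iff.1 hle).dotProduct_mulVec_nonneg v)).1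
  rw [sub_mulVec, dotProduct_sub, map_sub, Algebra.algebraMap_eq_smul_one, smul_mulVec,
    one_mulVec, dotProduct_smul, RCLike.smul_re] at this
  linarith

theorem sigmaMin_mul_norm_le {n : ℕ} (M : Matrix (Fin n) (Fin n) ℂ)
    (v : EuclideanSpace ℂ (Fin n)) : sigmaMin M * ‖v‖ ≤ ‖toLpLin 2 2 M v‖ := by
  have hH := isHermitian_conjTranspose_mul_self M
  have hI : 0 ≤ ⨅ i, hH.eigenvalues i :=
    Real.iInf_nonneg (eigenvalues_conjTranspose_mul_self_nonneg M)
  have hv : ‖v‖ ^ 2 = RCLike.re (star (WithLp.ofLp v) ⬝ᵥ WithLp.ofLp v) := by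
    rw [← inner_self_eq_norm_sq (𝕜 := ℂ), EuclideanSpace.inner_eq_star_dotProduct, dotProduct_comm]
  have hMv : ‖toLpLin 2 2 M v‖ ^ 2 =
      RCLike.re (star (WithLp.ofLp v) ⬝ᵥ (Mᴴ * M) *ᵥ WithLp.ofLp v) := by
    rw [← inner_self_eq_norm_sq (𝕜 := ℂ), EuclideanSpace.inner_eq_star_dotProduct, toLpLin_apply,
      WithLp.ofLp_toLp, ← mulVec_mulVec, dotProduct_mulVec, ← star_mulVec, dotProduct_comm]
  rw [← pow_le_pow_iff_left₀ (by unfold sigmaMin; positivity) (norm_nonneg _) two_ne_zero, mul_pow,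
    sigmaMin, Real.sq_sqrt hI, hv, hMv]
  exact hH.iInf_eigenvalues_mul_dotProduct_le _

theorem Matrix.ker_mulVecLin_sq_le_of_forall_norm_le {𝕜 n : Type*} [RCLike 𝕜] [Fintype n]
    [DecidableEq n] (N : Matrix n n 𝕜) {c : 𝕜} (hc : c ≠ 0)
    (h : ∀ v : EuclideanSpace 𝕜 n, ‖c‖ * ‖v‖ ≤ ‖toLpLin 2 2 (c • 1 + N) v‖) :
    LinearMap.ker (N.mulVecLin ^ 2) ≤ LinearMap.ker N.mulVecLin := by
  intro y hy
  have := Module.End.ker_sq_le_ker_of_forall_norm_le (toLpLin 2 2 N) hc (by simpa using h)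
    (x := WithLp.toLp 2 y) (by simpa [sq] using hy)
  simpa using this

theorem root_subspace_eq_eigenspace_of_singular_value_eq_dist_general
    {n : ℕ} (A : Matrix (Fin n) (Fin n) ℂ) (μ : ℂ)
    (z : ℂ) (hz : z ∉ spectrum ℂ A)
    (h : sigmaMin (z • (1 : Matrix (Fin n) (Fin n) ℂ) - A) = ‖z - μ‖) :
    LinearMap.ker (((μ • (1 : Matrix (Fin n) (Fin n) ℂ) - A) ^ n).mulVecLin)
      = LinearMap.ker ((μ • (1 : Matrix (Fin n) (Fin n) ℂ) - A).mulVecLin) := by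
  set N := μ • (1 : Matrix (Fin n) (Fin n) ℂ) - A
  rcases n.eq_zero_or_pos with rfl | hn
  · exact Subsingleton.elim _ _
  rw [Matrix.mulVecLin_pow]
  refine Module.End.ker_pow_eq_ker_of_ker_sq_le _ ?_ hn.ne'
  by_cases hzμ : z = μ
  · subst hzμ
    have hN : IsUnit N := by rwa [spectrum.notMem_iff, Algebra.algebraMap_eq_smul_one] at hz
    have hinj : Function.Injective N.mulVec := mulVec_injective_iff_isUnit.2 hN
    intro y hy
    exact hinj ((show N *ᵥ N *ᵥ y = 0 from hy).trans (mulVec_zero N).symm)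
  · have hM : z • 1 - A = (z - μ) • 1 + N := by simp only [N, sub_smul]; abel
    refine N.ker_mulVecLin_sq_le_of_forall_norm_le (sub_ne_zero.2 hzμ) fun v => ?_
    rw [← hM, ← h]
    exact sigmaMin_mul_norm_le _ v

/-- If λ is an eigenvalue of A and z ∉ Λ(A) satisfies σₙ(zIₙ − A) = |z − λ|, then λ is a
semisimple eigenvalue of A: the root subspace ker((λIₙ − A)ⁿ) equals the eigenspace
ker(λIₙ − A). -/
theorem root_subspace_eq_eigenspace_of_singular_value_eq_dist
    {n : ℕ} (A : Matrix (Fin n) (Fin n) ℂ) (μ : ℂ)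
    (hμeig : ∃ x : Fin n → ℂ, x ≠ 0 ∧ A *ᵥ x = μ • x)
    (z : ℂ) (hz : z ∉ spectrum ℂ A)
    (h : sigmaMin (z • (1 : Matrix (Fin n) (Fin n) ℂ) - A) = ‖z - μ‖) :
    LinearMap.ker (((μ • (1 : Matrix (Fin n) (Fin n) ℂ) - A) ^ n).mulVecLin)
      = LinearMap.ker ((μ • (1 : Matrix (Fin n) (Fin n) ℂ) - A).mulVecLin) :=
  root_subspace_eq_eigenspace_of_singular_value_eq_dist_general A μ z hz h
end

section
/- Let A be an n×n complex matrix (n ≥ 1). If for every complex number z one has σₙ(zIₙ − A) = dist(z, Λ(A)), where dist(z, Λ(A)) = min over α ∈ Λ(A) of |z − α|, then A is normal, i.e., A*A = AA*. -/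
/-!
Let `Av = μv`. Since `Λ(A)` is finite, there is `z ≠ μ` whose nearest eigenvalue is `μ`, so
`|z - μ| ≤ σₙ(M)` for `M = zI - A`. Then `M*M - |z - μ|²` is positive semidefinite and its
quadratic form vanishes at the eigenvector `v` of `M` (eigenvalue `z - μ`), so it kills `v`;
this gives `A*v = μ̄v`. Once every eigenvector of `A` is an eigenvector of `A*` for the conjugate
eigenvalue, `ker (A - μ)` is orthogonal to `range (A - μ)`, so generalized eigenvectors are
eigenvectors. Hence the eigenspaces of `A` span, and `A*A = AA*` on each of them.
-/

open Matrix

open Module.End ComplexConjugate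

theorem Set.Finite.exists_ne_infDist_eq_dist {E : Type*} [NormedAddCommGroup E]
    [NormedSpace ℝ E] [Nontrivial E] {s : Set E} (hs : s.Finite) {μ : E} (hμ : μ ∈ s) :
    ∃ z ≠ μ, Metric.infDist z s = dist z μ := by
  obtain ⟨ε, hε, hball⟩ :=
    Metric.isOpen_iff.mp (hs.sdiff (t := {μ})).isClosed.isOpen_compl μ (by simp)
  obtain ⟨x, hx⟩ := exists_norm_eq E (half_pos hε).le
  have hdist : dist (μ + x) μ = ε / 2 := by rw [dist_eq_norm, add_sub_cancel_left, hx]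
  refine ⟨μ + x, fun h => by linarith [dist_self μ, h ▸ hdist],
    le_antisymm (Metric.infDist_le_dist_of_mem hμ) ((Metric.le_infDist ⟨μ, hμ⟩).2 ?_)⟩
  intro α hα
  rcases eq_or_ne α μ with rfl | hne
  · rfl
  have hfar : ε ≤ dist α μ := not_lt.1 fun h => hball h ⟨hα, hne⟩
  linarith [dist_triangle α (μ + x) μ, dist_comm α (μ + x)]

namespace LinearMap

variable {E : Type*} [NormedAddCommGroup E] [InnerProductSpace ℂ E] [FiniteDimensional ℂ E]
  {T : E →ₗ[ℂ] E}

lemma inner_apply_sub_smul_eq_zero_of_mem_eigenspace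
    (hT : ∀ μ, eigenspace T μ ≤ eigenspace (adjoint T) (conj μ)) {μ : ℂ} {y : E}
    (hy : y ∈ eigenspace T μ) (x : E) : inner ℂ y (T x - μ • x) = 0 := by
  rw [inner_sub_right, ← adjoint_inner_left, mem_eigenspace_iff.mp (hT μ hy), inner_smul_left,
    inner_smul_right, Complex.conj_conj, sub_self]

lemma maxGenEigenspace_eq_eigenspace_of_eigenspace_le_eigenspace_adjoint
    (hT : ∀ μ, eigenspace T μ ≤ eigenspace (adjoint T) (conj μ)) (μ : ℂ) :
    maxGenEigenspace T μ = eigenspace T μ := by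
  refine le_antisymm (fun x hx => ?_) eigenspace_le_maxGenEigenspace
  obtain ⟨k, hk⟩ := (mem_maxGenEigenspace T μ x).mp hx
  clear hx
  induction k generalizing x with
  | zero => simp_all
  | succ k ih =>
    have hy : T x - μ • x ∈ eigenspace T μ := by
      refine ih _ ?_
      rwa [pow_succ, Module.End.mul_apply, sub_apply, smul_apply, Module.End.one_apply] at hk
    rw [mem_eigenspace_iff, ← sub_eq_zero, ← inner_self_eq_zero (𝕜 := ℂ)]
    exact inner_apply_sub_smul_eq_zero_of_mem_eigenspace hT hy x

theorem isStarNormal_of_eigenspace_le_eigenspace_adjoint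
    (hT : ∀ μ, eigenspace T μ ≤ eigenspace (adjoint T) (conj μ)) : IsStarNormal T := by
  rw [isStarNormal_iff, commute_iff_eq, star_eq_adjoint]
  suffices ⊤ ≤ eqLocus (adjoint T * T) (T * adjoint T) from LinearMap.ext fun x => this trivial
  rw [← iSup_maxGenEigenspace_eq_top T]
  refine iSup_le fun μ x hx => ?_
  rw [maxGenEigenspace_eq_eigenspace_of_eigenspace_le_eigenspace_adjoint hT] at hx
  have hx' := hT μ hx
  rw [mem_eigenspace_iff] at hx hx'
  simp [hx, hx', smul_smul, mul_comm]

end LinearMap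

namespace Matrix

open scoped MatrixOrder ComplexOrder

variable {n : ℕ}

lemma algebraMap_le_conjTranspose_mul_self_of_le_sigmaMin_sq (M : Matrix (Fin n) (Fin n) ℂ)
    {r : ℝ} (hr : r ≤ sigmaMin M ^ 2) : algebraMap ℝ _ r ≤ Mᴴ * M := by
  have hH := isHermitian_conjTranspose_mul_self M
  rw [algebraMap_le_iff_le_spectrum hH.isSelfAdjoint, hH.spectrum_real_eq_range_eigenvalues]
  rintro _ ⟨i, rfl⟩
  rw [sigmaMin, Real.sq_sqrt (Real.iInf_nonneg (eigenvalues_conjTranspose_mul_self_nonneg M))] at hr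
  exact hr.trans (ciInf_le (Set.finite_range _).bddBelow i)

lemma conjTranspose_mulVec_eq_star_smul_of_norm_le_sigmaMin {M : Matrix (Fin n) (Fin n) ℂ}
    {v : Fin n → ℂ} {c : ℂ} (hc : c ≠ 0) (hcM : ‖c‖ ≤ sigmaMin M) (hv : M *ᵥ v = c • v) :
    Mᴴ *ᵥ v = star c • v := by
  set P := Mᴴ * M - algebraMap ℝ _ (‖c‖ ^ 2)
  have hP : P.PosSemidef := Matrix.le_iff.mp <|
    algebraMap_le_conjTranspose_mul_self_of_le_sigmaMin_sq M
      (pow_le_pow_left₀ (norm_nonneg c) hcM 2)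
  have hcc : ((‖c‖ ^ 2 : ℝ) : ℂ) = c * star c := by
    rw [Complex.star_def, Complex.mul_conj, Complex.normSq_eq_norm_sq]
  have hPv : P *ᵥ v = c • (Mᴴ *ᵥ v) - (c * star c) • v := by
    rw [sub_mulVec, ← mulVec_mulVec, hv, mulVec_smul, Algebra.algebraMap_eq_smul_one, smul_mulVec,
      one_mulVec, ← hcc, Complex.coe_smul]
  have hquad : star v ⬝ᵥ P *ᵥ v = 0 := by
    rw [hPv, dotProduct_sub, dotProduct_smul, dotProduct_smul, dotProduct_mulVec,
      vecMul_conjTranspose, star_star, hv, star_smul, smul_dotProduct, smul_smul, sub_self]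
  rw [(hP.dotProduct_mulVec_zero_iff v).mp hquad, eq_comm, sub_eq_zero, mul_smul] at hPv
  exact smul_right_injective _ hc hPv

lemma conjTranspose_mulVec_eq_star_smul_of_infDist_le {A : Matrix (Fin n) (Fin n) ℂ}
    (h : ∀ z : ℂ, Metric.infDist z (spectrum ℂ A) ≤ sigmaMin (z • 1 - A)) {μ : ℂ}
    {v : Fin n → ℂ} (hv : A *ᵥ v = μ • v) : Aᴴ *ᵥ v = star μ • v := by
  rcases eq_or_ne v 0 with rfl | hv0
  · simp
  have hμ : μ ∈ spectrum ℂ A := by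
    rw [← spectrum_toLin', ← hasEigenvalue_iff_mem_spectrum]
    exact hasEigenvalue_of_hasEigenvector ⟨mem_eigenspace_iff.2 hv, hv0⟩
  obtain ⟨z, hzμ, hz⟩ := (finite_spectrum A).exists_ne_infDist_eq_dist hμ
  have hM : (z • 1 - A) *ᵥ v = (z - μ) • v := by
    rw [sub_mulVec, smul_mulVec, one_mulVec, hv, sub_smul]
  have hMstar := conjTranspose_mulVec_eq_star_smul_of_norm_le_sigmaMin (sub_ne_zero.2 hzμ)
    (by rw [← dist_eq_norm, ← hz]; exact h z) hM
  rw [conjTranspose_sub, conjTranspose_smul, conjTranspose_one, sub_mulVec, smul_mulVec,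
    one_mulVec, star_sub] at hMstar
  linear_combination (norm := module) -hMstar

lemma eigenspace_toEuclideanLin_le_eigenspace_adjoint {A : Matrix (Fin n) (Fin n) ℂ}
    (h : ∀ z : ℂ, Metric.infDist z (spectrum ℂ A) ≤ sigmaMin (z • 1 - A)) (μ : ℂ) :
    eigenspace (toEuclideanLin A) μ
      ≤ eigenspace (LinearMap.adjoint (toEuclideanLin A)) (conj μ) := by
  intro x hx
  rw [mem_eigenspace_iff] at hx ⊢
  rw [← toEuclideanLin_conjTranspose_eq_adjoint]
  have hAx := conjTranspose_mulVec_eq_star_smul_of_infDist_le h (congrArg WithLp.ofLp hx)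
  ext i
  simpa using congrFun hAx i

end Matrix

theorem normal_of_forall_singular_value_eq_dist_general
    {n : ℕ} (A : Matrix (Fin n) (Fin n) ℂ)
    (h : ∀ z : ℂ, sigmaMin (z • (1 : Matrix (Fin n) (Fin n) ℂ) - A)
      = Metric.infDist z (spectrum ℂ A)) :
    Aᴴ * A = A * Aᴴ := by
  have hnormal := LinearMap.isStarNormal_of_eigenspace_le_eigenspace_adjoint
    (eigenspace_toEuclideanLin_le_eigenspace_adjoint fun z => (h z).ge)
  have hA : LinearMap.toMatrixOrthonormal (EuclideanSpace.basisFun (Fin n) ℂ) (toEuclideanLin A)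
      = A := LinearMap.toMatrix_toLin _ _ A
  exact (hA ▸ hnormal.map _ : IsStarNormal A).star_comm_self

/-- If σₙ(zIₙ − A) = dist(z, Λ(A)) for every z ∈ ℂ, then A is normal. -/
theorem normal_of_forall_singular_value_eq_dist
    {n : ℕ} (hn : 1 ≤ n) (A : Matrix (Fin n) (Fin n) ℂ)
    (h : ∀ z : ℂ, sigmaMin (z • (1 : Matrix (Fin n) (Fin n) ℂ) - A)
      = Metric.infDist z (spectrum ℂ A)) :
    Aᴴ * A = A * Aᴴ :=
  normal_of_forall_singular_value_eq_dist_general A h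
end
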